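/- arXiv:1507.02630 — 3 statements merged into one kernel-verified Lean document; each statement's English description precedes it below -/
import Mathlib

section
/- Every semistable configuration in ℂ^m (m ≥ 1) is decomposable, i.e., it can be written as a finite nonnegative rational linear combination of indicator functions of bases of ℂ^m. -/
open scoped Classical

/-- The mass of a configuration `w` on a complex linear subspace `V` of `ℂ^m`. -/
noncomputable def massOn (m : ℕ) (w : (Fin m → ℂ) →₀ ℚ)
    (V : Submodule ℂ (Fin m → ℂ)) : ℚ :=
  ∑ v ∈ w.support.filter (fun v => v ∈ V), w v

/-- The total mass of a configuration. -/
noncomputable def totalMass (m : ℕ) (w : (Fin m → ℂ) →₀ ℚ) : ℚ :=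
  ∑ v ∈ w.support, w v

/-- A configuration: a finitely supported function `w : ℂ^m → ℚ` with
nonnegative values and `w 0 = 0`. -/
def IsConfiguration (m : ℕ) (w : (Fin m → ℂ) →₀ ℚ) : Prop :=
  (∀ v, 0 ≤ w v) ∧ w 0 = 0

/-- Semistability: every subspace of dimension `k` has mass at most `k·d/m`. -/
noncomputable def Semistable (m : ℕ) (w : (Fin m → ℂ) →₀ ℚ) : Prop :=
  ∀ V : Submodule ℂ (Fin m → ℂ),
    massOn m w V ≤ (Module.finrank ℂ V : ℚ) * totalMass m w / (m : ℚ)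

/-- Decomposability: `w` is a finite nonnegative rational combination of indicator
functions of bases of `ℂ^m` (each a set of `m` linearly independent vectors). -/
def Decomposable (m : ℕ) (w : (Fin m → ℂ) →₀ ℚ) : Prop :=
  ∃ (r : ℕ) (c : Fin r → ℚ) (B : Fin r → Finset (Fin m → ℂ)),
    (∀ t, 0 ≤ c t) ∧
    (∀ t, (B t).card = m ∧
      LinearIndependent ℂ (fun v : (B t : Set (Fin m → ℂ)) => (v : Fin m → ℂ))) ∧
    (∀ v, w v = ∑ t, c t * (if v ∈ B t then 1 else 0))

/-!
Call a subspace `V` tight when `w(V) = dim V · d / m`. Since `V ↦ w(V)` is supermodular and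
`dim` is modular, the tight subspaces of a semistable `w` form a sublattice, and every support
vector of `V ⊔ W` already lies in `V` or in `W`. Climbing a maximal chain of tight subspaces
therefore yields a basis `B` of support vectors that meets every tight subspace in a basis of it.
Subtracting `ε • 𝟙_B` keeps `w` semistable and every tight subspace tight, for all `ε` up to the
first value at which a weight on `B` vanishes or a new span of support vectors becomes tight. Either
event lowers the size of the support plus the number of non-tight spans of its subsets, so
induction on that number expresses `w` as a combination of indicators of bases.
-/

open Module Submodule

lemma exists_pos_mul_le_of_finset {𝕜 : Type*} [Field 𝕜] [LinearOrder 𝕜] [IsStrictOrderedRing 𝕜]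
    (C : Finset (𝕜 × 𝕜)) (hC : ∀ p ∈ C, 0 ≤ p.1) (hCpos : ∀ p ∈ C, 0 < p.2 → 0 < p.1)
    (hne : ∃ p ∈ C, 0 < p.2) :
    ∃ ε > 0, (∀ p ∈ C, ε * p.2 ≤ p.1) ∧ ∃ p ∈ C, 0 < p.2 ∧ ε * p.2 = p.1 := by
  obtain ⟨p₀, hp₀, hmin⟩ := (C.filter (0 < ·.2)).exists_min_image (fun p => p.1 / p.2)
    (let ⟨p, hp, hp2⟩ := hne; ⟨p, Finset.mem_filter.2 ⟨hp, hp2⟩⟩)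
  obtain ⟨hp₀C, hp₀2⟩ := Finset.mem_filter.1 hp₀
  have hε : 0 < p₀.1 / p₀.2 := div_pos (hCpos p₀ hp₀C hp₀2) hp₀2
  refine ⟨p₀.1 / p₀.2, hε, fun p hp => ?_, p₀, hp₀C, hp₀2, div_mul_cancel₀ _ hp₀2.ne'⟩
  rcases lt_or_ge 0 p.2 with hp2 | hp2
  · exact (le_div_iff₀ hp2).1 (hmin p (Finset.mem_filter.2 ⟨hp, hp2⟩))
  · exact (mul_nonpos_of_nonneg_of_nonpos hε.le hp2).trans (hC p hp)

noncomputable def indicatorFinsupp {α : Type*} (s : Finset α) : α →₀ ℚ :=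
  Finsupp.indicator s fun _ _ => 1

lemma support_indicatorFinsupp_subset {α : Type*} (s : Finset α) :
    (indicatorFinsupp s).support ⊆ s :=
  Finsupp.support_indicator_subset s _

lemma indicatorFinsupp_apply {α : Type*} (s : Finset α) (a : α) :
    indicatorFinsupp s a = if a ∈ s then 1 else 0 := by
  simp [indicatorFinsupp, Finsupp.indicator_apply]

lemma card_filter_mem_eq_finrank {K E : Type*} [Field K] [AddCommGroup E] [Module K E]
    {B : Finset E} (hB : LinearIndepOn K id (B : Set E)) {Z : Submodule K E}
    (hZ : Z ≤ span K (↑B ∩ ↑Z)) : (B.filter (· ∈ Z)).card = finrank K Z := by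
  have hcoe : ((B.filter (· ∈ Z) : Finset E) : Set E) = ↑B ∩ ↑Z := by ext; simp
  have hspan : span K ((B.filter (· ∈ Z) : Finset E) : Set E) = Z :=
    le_antisymm (span_le.2 (hcoe ▸ Set.inter_subset_right)) (hcoe ▸ hZ)
  rw [← finrank_span_finset_eq_card (hB.mono (hcoe ▸ Set.inter_subset_left)), hspan]

section Mass

variable {m : ℕ}

lemma massOn_eq_sum_of_support_subset {w : (Fin m → ℂ) →₀ ℚ} {s : Finset (Fin m → ℂ)}
    (hs : w.support ⊆ s) (V : Submodule ℂ (Fin m → ℂ)) :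
    massOn m w V = ∑ v ∈ s with v ∈ V, w v :=
  Finset.sum_subset (Finset.filter_subset_filter _ hs) fun v hv hvw => by simp_all

lemma massOn_sub (w u : (Fin m → ℂ) →₀ ℚ) (V : Submodule ℂ (Fin m → ℂ)) :
    massOn m (w - u) V = massOn m w V - massOn m u V := by
  rw [massOn_eq_sum_of_support_subset Finsupp.support_sub,
    massOn_eq_sum_of_support_subset (Finset.subset_union_left (s₂ := u.support)),
    massOn_eq_sum_of_support_subset (Finset.subset_union_right (s₁ := w.support)),
    ← Finset.sum_sub_distrib]
  rfl

lemma massOn_smul (c : ℚ) (w : (Fin m → ℂ) →₀ ℚ) (V : Submodule ℂ (Fin m → ℂ)) :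
    massOn m (c • w) V = c * massOn m w V := by
  rw [massOn_eq_sum_of_support_subset Finsupp.support_smul, massOn, Finset.mul_sum]
  rfl

lemma totalMass_eq_massOn_top (w : (Fin m → ℂ) →₀ ℚ) : totalMass m w = massOn m w ⊤ := by
  simp [massOn, totalMass]

lemma massOn_span_support_inter (w : (Fin m → ℂ) →₀ ℚ) (V : Submodule ℂ (Fin m → ℂ)) :
    massOn m w (span ℂ (w.support.filter (· ∈ V) : Set (Fin m → ℂ))) = massOn m w V := by
  refine Finset.sum_congr (Finset.filter_congr fun v hv => ⟨fun h => ?_, fun h => ?_⟩)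
    fun _ _ => rfl
  · exact span_le.2 (fun u hu => (Finset.mem_filter.1 hu).2) h
  · exact subset_span (Finset.mem_filter.2 ⟨hv, h⟩)

lemma massOn_add_massOn_add_sum_eq (w : (Fin m → ℂ) →₀ ℚ) (V W : Submodule ℂ (Fin m → ℂ)) :
    massOn m w V + massOn m w W + ∑ v ∈ w.support with v ∈ V ⊔ W ∧ v ∉ V ∧ v ∉ W, w v =
      massOn m w (V ⊔ W) + massOn m w (V ⊓ W) := by
  simp only [massOn, Finset.sum_filter, ← Finset.sum_add_distrib]
  refine Finset.sum_congr rfl fun v _ => ?_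
  by_cases hV : v ∈ V <;> by_cases hW : v ∈ W <;>
    simp [hV, hW, mem_sup_left, mem_sup_right]

end Mass

section Tight

variable {m : ℕ}

noncomputable def slack (m : ℕ) (w : (Fin m → ℂ) →₀ ℚ) (V : Submodule ℂ (Fin m → ℂ)) : ℚ :=
  finrank ℂ V * totalMass m w / m - massOn m w V

def Tight (m : ℕ) (w : (Fin m → ℂ) →₀ ℚ) (V : Submodule ℂ (Fin m → ℂ)) : Prop :=
  slack m w V = 0

lemma Semistable.slack_nonneg {w : (Fin m → ℂ) →₀ ℚ} (hss : Semistable m w)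
    (V : Submodule ℂ (Fin m → ℂ)) : 0 ≤ slack m w V :=
  sub_nonneg.2 (hss V)

lemma tight_top (hm : 0 < m) (w : (Fin m → ℂ) →₀ ℚ) : Tight m w ⊤ := by
  simp [Tight, slack, ← totalMass_eq_massOn_top, hm.ne']

lemma tight_bot {w : (Fin m → ℂ) →₀ ℚ} (hw0 : w 0 = 0) : Tight m w ⊥ := by
  simp [Tight, slack, massOn, Finset.filter_eq', hw0]

lemma slack_sup_add_slack_inf_add_sum_eq (w : (Fin m → ℂ) →₀ ℚ)
    (V W : Submodule ℂ (Fin m → ℂ)) :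
    slack m w (V ⊔ W) + slack m w (V ⊓ W) + ∑ v ∈ w.support with v ∈ V ⊔ W ∧ v ∉ V ∧ v ∉ W, w v =
      slack m w V + slack m w W := by
  have hrank : (finrank ℂ ↥(V ⊔ W) + finrank ℂ ↥(V ⊓ W) : ℚ) =
      finrank ℂ V + finrank ℂ W := by
    exact_mod_cast finrank_sup_add_finrank_inf_eq V W
  unfold slack
  linear_combination (totalMass m w / m) * hrank + massOn_add_massOn_add_sum_eq w V W

lemma Tight.sup_inf {w : (Fin m → ℂ) →₀ ℚ} (hw : ∀ v, 0 ≤ w v) (hss : Semistable m w)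
    {V W : Submodule ℂ (Fin m → ℂ)} (hV : Tight m w V) (hW : Tight m w W) :
    Tight m w (V ⊔ W) ∧ Tight m w (V ⊓ W) ∧ ∀ v ∈ w.support, v ∈ V ⊔ W → v ∈ V ∨ v ∈ W := by
  have hid := slack_sup_add_slack_inf_add_sum_eq w V W
  have hsum : 0 ≤ ∑ v ∈ w.support with v ∈ V ⊔ W ∧ v ∉ V ∧ v ∉ W, w v :=
    Finset.sum_nonneg fun v _ => hw v
  have hsup := hss.slack_nonneg (V ⊔ W)
  have hinf := hss.slack_nonneg (V ⊓ W)
  rw [Tight] at hV hW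
  refine ⟨by rw [Tight]; linarith, by rw [Tight]; linarith, fun v hv hvVW => ?_⟩
  have hzero := (Finset.sum_eq_zero_iff_of_nonneg fun v _ => hw v).1 (by linarith) v
  by_contra h
  exact Finsupp.mem_support_iff.1 hv (hzero (Finset.mem_filter.2 ⟨hv, hvVW, not_or.1 h⟩))

end Tight

section Adapted

variable {m : ℕ} {w : (Fin m → ℂ) →₀ ℚ}

lemma span_support_inter_eq_of_tight (hm : 0 < m) (hss : Semistable m w)
    (hd : 0 < totalMass m w) {V : Submodule ℂ (Fin m → ℂ)} (hV : Tight m w V) :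
    span ℂ (w.support.filter (· ∈ V) : Set (Fin m → ℂ)) = V := by
  set V' := span ℂ (w.support.filter (· ∈ V) : Set (Fin m → ℂ))
  have hle : V' ≤ V := span_le.2 fun v hv => (Finset.mem_filter.1 hv).2
  have hslack := hss.slack_nonneg V'
  rw [Tight, slack] at hV
  rw [slack, massOn_span_support_inter, mul_div_assoc] at hslack
  rw [mul_div_assoc] at hV
  have hrank : (finrank ℂ V : ℚ) ≤ finrank ℂ V' :=
    le_of_mul_le_mul_right (by linarith) (div_pos hd (Nat.cast_pos.2 hm))
  exact eq_of_le_of_finrank_le hle (by exact_mod_cast hrank)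

lemma exists_minimal_tight_gt (hm : 0 < m) (w : (Fin m → ℂ) →₀ ℚ)
    {V : Submodule ℂ (Fin m → ℂ)} (hV : V ≠ ⊤) :
    ∃ V₁, Tight m w V₁ ∧ V < V₁ ∧ ∀ Z, Tight m w Z → V < Z → Z ≤ V₁ → Z = V₁ := by
  obtain ⟨V₁, ⟨hV₁, hVV₁⟩, hmin⟩ := wellFounded_lt.has_min {Z | Tight m w Z ∧ V < Z}
    ⟨⊤, tight_top hm w, lt_top_iff_ne_top.2 hV⟩
  exact ⟨V₁, hV₁, hVV₁, fun Z hZ hVZ hZV₁ => hZV₁.eq_of_not_lt (hmin Z ⟨hZ, hVZ⟩)⟩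

/-- The join of `V` and `Z ⊓ V₁` is tight, hence `V` or `V₁`; in the second case every vector of
`B₁` lies in `V` or in `Z`, and the modular law splits `Z ⊓ V₁`. -/
lemma inf_le_span_inter_of_tight_cover (hw : ∀ v, 0 ≤ w v) (hss : Semistable m w)
    {V V₁ : Submodule ℂ (Fin m → ℂ)} (hV : Tight m w V) (hV₁ : Tight m w V₁) (hVV₁ : V ≤ V₁)
    (hmin : ∀ Z, Tight m w Z → V < Z → Z ≤ V₁ → Z = V₁)
    {B B₁ : Set (Fin m → ℂ)} (hBB₁ : B ⊆ B₁) (hB₁s : B₁ ⊆ w.support) (hB₁V₁ : B₁ ⊆ V₁)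
    (hspan₁ : V₁ ≤ span ℂ B₁) (hB : ∀ Z, Tight m w Z → Z ⊓ V ≤ span ℂ (B ∩ Z))
    {Z : Submodule ℂ (Fin m → ℂ)} (hZ : Tight m w Z) : Z ⊓ V₁ ≤ span ℂ (B₁ ∩ Z) := by
  have hBZ : Z ⊓ V ≤ span ℂ (B₁ ∩ Z) :=
    (hB Z hZ).trans (span_mono (Set.inter_subset_inter_left _ hBB₁))
  have hW : Tight m w (Z ⊓ V₁) := (hZ.sup_inf hw hss hV₁).2.1
  obtain ⟨hK, -, hsplit⟩ := hW.sup_inf hw hss hV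
  rcases (le_sup_right : V ≤ Z ⊓ V₁ ⊔ V).lt_or_eq with hlt | heq
  · have hKV₁ : Z ⊓ V₁ ⊔ V = V₁ := hmin _ hK hlt (sup_le inf_le_right hVV₁)
    have hV₁le : V₁ ≤ span ℂ (B₁ ∩ ↑(Z ⊓ V₁)) ⊔ V := by
      refine hspan₁.trans (span_le.2 fun b hb => ?_)
      rcases hsplit b (hB₁s hb) (hKV₁.symm ▸ hB₁V₁ hb) with h | h
      · exact mem_sup_left (subset_span ⟨hb, h⟩)
      · exact mem_sup_right h
    have hspan_le : span ℂ (B₁ ∩ ↑(Z ⊓ V₁)) ≤ Z ⊓ V₁ := span_le.2 Set.inter_subset_right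
    calc Z ⊓ V₁ = (span ℂ (B₁ ∩ ↑(Z ⊓ V₁)) ⊔ V) ⊓ (Z ⊓ V₁) :=
          (inf_eq_right.2 (hV₁le.trans' inf_le_right)).symm
      _ = span ℂ (B₁ ∩ ↑(Z ⊓ V₁)) ⊔ V ⊓ (Z ⊓ V₁) := sup_inf_assoc_of_le _ hspan_le
      _ ≤ span ℂ (B₁ ∩ Z) := sup_le
          (span_mono (Set.inter_subset_inter_right _ fun _ h => (mem_inf.1 h).1))
          (le_trans (le_inf (inf_le_right.trans inf_le_left) inf_le_left) hBZ)
  · have hW : Z ⊓ V₁ ≤ V := heq ▸ le_sup_left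
    exact (le_inf inf_le_left hW).trans hBZ

lemma exists_adapted_basis_of_tight (hm : 0 < m) (hw : ∀ v, 0 ≤ w v) (hss : Semistable m w)
    (hd : 0 < totalMass m w) (V : Submodule ℂ (Fin m → ℂ)) (hV : Tight m w V)
    (B : Set (Fin m → ℂ)) (hBs : B ⊆ w.support) (hBind : LinearIndepOn ℂ id B)
    (hBV : span ℂ B = V) (hB : ∀ Z, Tight m w Z → Z ⊓ V ≤ span ℂ (B ∩ Z)) :
    ∃ B' : Set (Fin m → ℂ), B' ⊆ w.support ∧ LinearIndepOn ℂ id B' ∧ span ℂ B' = ⊤ ∧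
      ∀ Z, Tight m w Z → Z ≤ span ℂ (B' ∩ Z) := by
  induction V using WellFoundedGT.induction generalizing B with
  | _ V ih =>
  by_cases hVtop : V = ⊤
  · subst hVtop
    exact ⟨B, hBs, hBind, hBV, fun Z hZ => by simpa using hB Z hZ⟩
  obtain ⟨V₁, hV₁, hVV₁, hmin⟩ := exists_minimal_tight_gt hm w hVtop
  set t : Set (Fin m → ℂ) := ↑(w.support.filter (· ∈ V₁))
  have hBt : B ⊆ t := fun b hb =>
    Finset.mem_filter.2 ⟨hBs hb, hVV₁.le (hBV ▸ subset_span hb)⟩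
  obtain ⟨B₁, hB₁t, hBB₁, htB₁, hB₁ind⟩ := exists_linearIndepOn_extension hBind hBt
  rw [Set.image_id, Set.image_id] at htB₁
  have hB₁s : B₁ ⊆ w.support := fun b hb => (Finset.mem_filter.1 (hB₁t hb)).1
  have hB₁V₁ : B₁ ⊆ V₁ := fun b hb => (Finset.mem_filter.1 (hB₁t hb)).2
  have hspan₁ : V₁ ≤ span ℂ B₁ :=
    (span_support_inter_eq_of_tight hm hss hd hV₁).symm.le.trans (span_le.2 htB₁)
  exact ih V₁ hVV₁ hV₁ B₁ hB₁s hB₁ind (le_antisymm (span_le.2 hB₁V₁) hspan₁)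
    fun Z hZ => inf_le_span_inter_of_tight_cover hw hss hV hV₁ hVV₁.le hmin hBB₁ hB₁s hB₁V₁
      hspan₁ hB hZ

lemma exists_adapted_basis (hm : 0 < m) (hw : IsConfiguration m w) (hss : Semistable m w)
    (hd : 0 < totalMass m w) :
    ∃ B : Finset (Fin m → ℂ), B ⊆ w.support ∧ B.card = m ∧
      LinearIndepOn ℂ id (B : Set (Fin m → ℂ)) ∧
      ∀ Z, Tight m w Z → (B.filter (· ∈ Z)).card = finrank ℂ Z := by
  obtain ⟨B, hBs, hBind, hBspan, hB⟩ := exists_adapted_basis_of_tight hm hw.1 hss hd ⊥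
    (tight_bot hw.2) ∅ (Set.empty_subset _) (linearIndepOn_empty ℂ id) span_empty (by simp)
  have hBfin : B.Finite := w.support.finite_toSet.subset hBs
  lift B to Finset (Fin m → ℂ) using hBfin
  refine ⟨B, by exact_mod_cast hBs, ?_, hBind,
    fun Z hZ => card_filter_mem_eq_finrank hBind (hB Z hZ)⟩
  rw [← finrank_span_finset_eq_card hBind, hBspan, finrank_top, finrank_fin_fun]

end Adapted

section Reduction

variable {m : ℕ}

lemma massOn_indicatorFinsupp (B : Finset (Fin m → ℂ)) (V : Submodule ℂ (Fin m → ℂ)) :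
    massOn m (indicatorFinsupp B) V = (B.filter (· ∈ V)).card := by
  rw [massOn_eq_sum_of_support_subset (support_indicatorFinsupp_subset B),
    Finset.sum_congr rfl fun v hv => by
      rw [indicatorFinsupp_apply, if_pos (Finset.mem_filter.1 hv).1],
    Finset.sum_const, nsmul_one]

noncomputable def deficiency (B : Finset (Fin m → ℂ)) (V : Submodule ℂ (Fin m → ℂ)) : ℚ :=
  finrank ℂ V - (B.filter (· ∈ V)).card

lemma slack_sub_smul_indicatorFinsupp (hm : 0 < m) (w : (Fin m → ℂ) →₀ ℚ) (ε : ℚ)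
    {B : Finset (Fin m → ℂ)} (hB : B.card = m) (V : Submodule ℂ (Fin m → ℂ)) :
    slack m (w - ε • indicatorFinsupp B) V = slack m w V - ε * deficiency B V := by
  have hm' : (m : ℚ) ≠ 0 := by positivity
  simp only [slack, deficiency, totalMass_eq_massOn_top, massOn_sub, massOn_smul,
    massOn_indicatorFinsupp, mem_top, Finset.filter_true, hB]
  field_simp
  ring

lemma semistable_of_slack_span_nonneg {w : (Fin m → ℂ) →₀ ℚ} (hw : ∀ v, 0 ≤ w v)
    (h : ∀ S ⊆ w.support, 0 ≤ slack m w (span ℂ (S : Set (Fin m → ℂ)))) : Semistable m w := by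
  intro V
  have hS := h _ (Finset.filter_subset (· ∈ V) _)
  rw [slack, massOn_span_support_inter, sub_nonneg] at hS
  refine hS.trans
    (div_le_div_of_nonneg_right (mul_le_mul_of_nonneg_right ?_ ?_) (by positivity))
  · exact_mod_cast finrank_mono (span_le.2 fun v hv => (Finset.mem_filter.1 hv).2)
  · exact Finset.sum_nonneg fun v _ => hw v

variable {w : (Fin m → ℂ) →₀ ℚ} {B : Finset (Fin m → ℂ)}

lemma isConfiguration_sub_smul_indicatorFinsupp (hw : IsConfiguration m w)
    (hBs : B ⊆ w.support) {ε : ℚ} (hεB : ∀ b ∈ B, ε ≤ w b) :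
    IsConfiguration m (w - ε • indicatorFinsupp B) := by
  refine ⟨fun v => ?_, ?_⟩
  · by_cases hv : v ∈ B <;> simp [indicatorFinsupp_apply, hv, hεB, hw.1 v]
  · have h0 : (0 : Fin m → ℂ) ∉ B := fun h => Finsupp.mem_support_iff.1 (hBs h) hw.2
    simp [indicatorFinsupp_apply, h0, hw.2]

lemma support_sub_smul_indicatorFinsupp_subset (hBs : B ⊆ w.support) (ε : ℚ) :
    (w - ε • indicatorFinsupp B).support ⊆ w.support :=
  Finsupp.support_sub.trans (Finset.union_subset_iff.2
    ⟨subset_rfl, Finsupp.support_smul.trans ((support_indicatorFinsupp_subset B).trans hBs)⟩)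

/-- `ε` is the largest step keeping `w - ε • indicatorFinsupp B` nonnegative and semistable (by
`slack_sub_smul_indicatorFinsupp`); it is positive because `B` has deficiency zero in every tight
subspace. -/
lemma exists_step_size (hw : IsConfiguration m w) (hss : Semistable m w) (hBs : B ⊆ w.support)
    (hBne : B.Nonempty) (hB : ∀ Z, Tight m w Z → (B.filter (· ∈ Z)).card = finrank ℂ Z) :
    ∃ ε > 0, (∀ b ∈ B, ε ≤ w b) ∧
      (∀ S ⊆ w.support, ε * deficiency B (span ℂ ↑S) ≤ slack m w (span ℂ ↑S)) ∧
      ((∃ b ∈ B, ε = w b) ∨ ∃ S ⊆ w.support, ¬ Tight m w (span ℂ ↑S) ∧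
        ε * deficiency B (span ℂ ↑S) = slack m w (span ℂ ↑S)) := by
  have hwpos : ∀ b ∈ B, 0 < w b := fun b hb =>
    (hw.1 b).lt_of_ne' (Finsupp.mem_support_iff.1 (hBs hb))
  have hslack : ∀ S : Finset (Fin m → ℂ),
      0 < deficiency B (span ℂ ↑S) → 0 < slack m w (span ℂ ↑S) :=
    fun S hS => (hss.slack_nonneg _).lt_of_ne' fun h => by simp [deficiency, hB _ h] at hS
  obtain ⟨ε, hε, hεC, p, hpC, hp2, hεp⟩ := exists_pos_mul_le_of_finset
    (B.image (fun b => (w b, 1)) ∪ w.support.powerset.image fun S : Finset (Fin m → ℂ) =>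
      (slack m w (span ℂ ↑S), deficiency B (span ℂ ↑S)))
    (by simp [or_imp, forall_and, (hw.1 _), hss.slack_nonneg])
    (by simpa [or_imp, forall_and] using ⟨hwpos, fun S _ => hslack S⟩)
    (let ⟨b, hb⟩ := hBne; ⟨_, Finset.mem_union_left _ (Finset.mem_image_of_mem _ hb), one_pos⟩)
  refine ⟨ε, hε, fun b hb => ?_, fun S hS => ?_, ?_⟩
  · simpa using hεC _ (Finset.mem_union_left _ (Finset.mem_image_of_mem _ hb))
  · exact hεC _ (Finset.mem_union_right _
      (Finset.mem_image_of_mem _ (Finset.mem_powerset.2 hS)))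
  · simp only [Finset.mem_union, Finset.mem_image, Finset.mem_powerset] at hpC
    rcases hpC with ⟨b, hb, rfl⟩ | ⟨S, hS, rfl⟩
    · exact Or.inl ⟨b, hb, by simpa using hεp⟩
    · exact Or.inr ⟨S, hS, (hslack S hp2).ne', hεp⟩

end Reduction

section Induction

variable {m : ℕ}

noncomputable def nonTightSpans (m : ℕ) (w : (Fin m → ℂ) →₀ ℚ) : Finset (Finset (Fin m → ℂ)) :=
  w.support.powerset.filter fun S => ¬ Tight m w (span ℂ ↑S)

noncomputable def complexity (m : ℕ) (w : (Fin m → ℂ) →₀ ℚ) : ℕ :=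
  w.support.card + (nonTightSpans m w).card

lemma complexity_lt {w w' : (Fin m → ℂ) →₀ ℚ} (hsupp : w'.support ⊆ w.support)
    (htight : ∀ V, Tight m w V → Tight m w' V)
    (h : (∃ v ∈ w.support, w' v = 0) ∨
      ∃ S ⊆ w.support, ¬ Tight m w (span ℂ (S : Set (Fin m → ℂ))) ∧ Tight m w' (span ℂ ↑S)) :
    complexity m w' < complexity m w := by
  have hnt : nonTightSpans m w' ⊆ nonTightSpans m w := by
    intro S hS
    simp only [nonTightSpans, Finset.mem_filter, Finset.mem_powerset] at hS ⊢
    exact ⟨hS.1.trans hsupp, fun hSw => hS.2 (htight _ hSw)⟩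
  unfold complexity
  rcases h with ⟨v, hv, hv0⟩ | ⟨S, hS, hSw, hSw'⟩
  · have := Finset.card_lt_card ((Finset.ssubset_iff_of_subset hsupp).2
      ⟨v, hv, Finsupp.notMem_support_iff.2 hv0⟩)
    have := Finset.card_le_card hnt
    omega
  · have := Finset.card_le_card hsupp
    have := Finset.card_lt_card ((Finset.ssubset_iff_of_subset hnt).2
      ⟨S, Finset.mem_filter.2 ⟨Finset.mem_powerset.2 hS, hSw⟩,
        fun h => (Finset.mem_filter.1 h).2 hSw'⟩)
    omega

lemma exists_reduction {w : (Fin m → ℂ) →₀ ℚ} (hw : IsConfiguration m w) (hss : Semistable m w)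
    (hw0 : w ≠ 0) :
    ∃ (ε : ℚ) (B : Finset (Fin m → ℂ)) (w' : (Fin m → ℂ) →₀ ℚ), 0 ≤ ε ∧ B.card = m ∧
      LinearIndepOn ℂ id (B : Set (Fin m → ℂ)) ∧ w = w' + ε • indicatorFinsupp B ∧
      IsConfiguration m w' ∧ Semistable m w' ∧ complexity m w' < complexity m w := by
  obtain ⟨v₀, hv₀⟩ := Finsupp.support_nonempty_iff.2 hw0
  have hm : 0 < m := Nat.pos_of_ne_zero fun hm0 => by
    subst hm0
    exact Finsupp.mem_support_iff.1 hv₀ (Subsingleton.elim v₀ 0 ▸ hw.2)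
  have hd : 0 < totalMass m w :=
    Finset.sum_pos (fun v hv => (hw.1 v).lt_of_ne' (Finsupp.mem_support_iff.1 hv)) ⟨v₀, hv₀⟩
  obtain ⟨B, hBs, hBcard, hBind, hB⟩ := exists_adapted_basis hm hw hss hd
  obtain ⟨ε, hε, hεB, hεS, hεeq⟩ :=
    exists_step_size hw hss hBs (Finset.card_pos.1 (by omega)) hB
  have hslack := slack_sub_smul_indicatorFinsupp hm w ε hBcard
  have hw' := isConfiguration_sub_smul_indicatorFinsupp hw hBs hεB
  have hsupp := support_sub_smul_indicatorFinsupp_subset hBs ε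
  refine ⟨ε, B, _, hε.le, hBcard, hBind, (sub_add_cancel _ _).symm, hw', ?_,
    complexity_lt hsupp ?_ ?_⟩
  · exact semistable_of_slack_span_nonneg hw'.1 fun S hS => by
      rw [hslack, sub_nonneg]
      exact hεS S (hS.trans hsupp)
  · intro V hV
    rw [Tight, hslack, hV, deficiency, hB V hV, sub_self, mul_zero, sub_zero]
  · rcases hεeq with ⟨b, hb, hεb⟩ | ⟨S, hS, hSw, hεS⟩
    · exact Or.inl ⟨b, hBs hb, by simp [indicatorFinsupp_apply, hb, hεb]⟩
    · exact Or.inr ⟨S, hS, hSw, by rw [Tight, hslack, hεS, sub_self]⟩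

lemma decomposable_zero : Decomposable m 0 :=
  ⟨0, Fin.elim0, Fin.elim0, fun t => t.elim0, fun t => t.elim0, fun v => by simp⟩

lemma Decomposable.add_smul_indicatorFinsupp {w : (Fin m → ℂ) →₀ ℚ} (hw : Decomposable m w)
    {ε : ℚ} (hε : 0 ≤ ε) {B : Finset (Fin m → ℂ)} (hB : B.card = m)
    (hBind : LinearIndepOn ℂ id (B : Set (Fin m → ℂ))) :
    Decomposable m (w + ε • indicatorFinsupp B) := by
  obtain ⟨r, c, Bs, hc, hBs, hsum⟩ := hw
  refine ⟨r + 1, Fin.cons ε c, Fin.cons B Bs, Fin.cases hε hc, Fin.cases ⟨hB, hBind⟩ hBs,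
    fun v => ?_⟩
  simp [Fin.sum_univ_succ, hsum v, indicatorFinsupp_apply, add_comm]

end Induction

theorem semistable_imp_decomposable_general (m : ℕ)
    (w : (Fin m → ℂ) →₀ ℚ) (hw : IsConfiguration m w) (hss : Semistable m w) :
    Decomposable m w := by
  induction hc : complexity m w using Nat.strong_induction_on generalizing w with
  | _ n ih =>
  by_cases hw0 : w = 0
  · exact hw0 ▸ decomposable_zero
  obtain ⟨ε, B, w', hε, hB, hBind, rfl, hw', hss', hlt⟩ := exists_reduction hw hss hw0
  exact (ih _ (hc ▸ hlt) w' hw' hss' rfl).add_smul_indicatorFinsupp hε hB hBind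

/-- Every semistable configuration in `ℂ^m` (`m ≥ 1`) is decomposable. -/
theorem semistable_imp_decomposable (m : ℕ) (hm : 1 ≤ m)
    (w : (Fin m → ℂ) →₀ ℚ) (hw : IsConfiguration m w) (hss : Semistable m w) :
    Decomposable m w :=
  semistable_imp_decomposable_general m w hw hss
end

section
/- Let w be a semistable configuration in ℂ^m of total mass d > 0, and let V ⊆ ℂ^m be a complex linear subspace of dimension k with 0 < k < m such that w(V) = k·d/m exactly. Let π : ℂ^m → ℂ^m/V be the quotient map, and define the pushforward configuration w̄ on ℂ^m/V by w̄(u) = ∑_{v ∉ V, π(v) = u} w(v) for u ≠ 0 (and w̄(0) = 0). Then w̄ is a semistable configuration in the (m−k)-dimensional space ℂ^m/V of total mass (m−k)·d/m; that is, every complex linear subspace of ℂ^m/V of dimension j has w̄-mass at most j·d/m. -/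
open scoped Classical

/-!
For a subspace `W` of `ℂ^m/V`, its preimage `U = π⁻¹(W)` contains `V` and has dimension
`dim W + k`, and the mass of `U` splits as `w(V) + w̄(W)`. Semistability of `w` on `U`,
together with `w(V) = k·d/m`, leaves exactly `w̄(W) ≤ dim W · d/m`.
-/

theorem Submodule.finrank_comap_mkQ {K E : Type*} [DivisionRing K] [AddCommGroup E] [Module K E]
    [FiniteDimensional K E] (V : Submodule K E) (W : Submodule K (E ⧸ V)) :
    Module.finrank K (W.comap V.mkQ) = Module.finrank K W + Module.finrank K V := by
  have h := LinearMap.finrank_range_add_finrank_ker (V.mkQ.domRestrict (W.comap V.mkQ))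
  rw [LinearMap.range_domRestrict, Submodule.map_comap_eq_of_surjective V.mkQ_surjective,
    LinearMap.ker_domRestrict, Submodule.ker_mkQ,
    (Submodule.comapSubtypeEquivOfLe (Submodule.le_comap_mkQ V W)).finrank_eq] at h
  exact h.symm

theorem totalMass_eq_massOn_add {m : ℕ} (w : (Fin m → ℂ) →₀ ℚ) (V : Submodule ℂ (Fin m → ℂ)) :
    totalMass m w = massOn m w V + ∑ v ∈ w.support.filter (fun v => v ∉ V), w v :=
  (Finset.sum_filter_add_sum_filter_not _ _ _).symm

theorem massOn_eq_massOn_add_of_le {m : ℕ} (w : (Fin m → ℂ) →₀ ℚ)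
    {V U : Submodule ℂ (Fin m → ℂ)} (hVU : V ≤ U) :
    massOn m w U = massOn m w V + ∑ v ∈ w.support.filter (fun v => v ∉ V ∧ v ∈ U), w v := by
  rw [massOn, ← Finset.sum_filter_add_sum_filter_not _ (· ∈ V), Finset.filter_filter,
    Finset.filter_filter, massOn]
  congr 2
  · exact Finset.filter_congr fun v _ => and_iff_right_of_imp (@hVU v)
  · exact Finset.filter_congr fun v _ => and_comm

theorem pushforward_semistable_general (m : ℕ) (hm : 1 ≤ m)
    (w : (Fin m → ℂ) →₀ ℚ) (hss : Semistable m w)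
    (d : ℚ) (hd : totalMass m w = d)
    (V : Submodule ℂ (Fin m → ℂ)) (k : ℕ) (hk : Module.finrank ℂ V = k)
    (heq : massOn m w V = (k : ℚ) * d / (m : ℚ)) :
    (∑ v ∈ w.support.filter (fun v => v ∉ V), w v) = ((m : ℚ) - k) * d / (m : ℚ) ∧
    ∀ W : Submodule ℂ ((Fin m → ℂ) ⧸ V),
      (∑ v ∈ w.support.filter (fun v => v ∉ V ∧ V.mkQ v ∈ W), w v)
        ≤ (Module.finrank ℂ W : ℚ) * d / (m : ℚ) := by
  have hm0 : (m : ℚ) ≠ 0 := Nat.cast_ne_zero.2 (by omega)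
  refine ⟨?_, fun W => ?_⟩
  · calc _ = totalMass m w - massOn m w V := by rw [totalMass_eq_massOn_add]; ring
      _ = _ := by rw [hd, heq]; field_simp
  · have hsplit : massOn m w (W.comap V.mkQ) = massOn m w V +
        ∑ v ∈ w.support.filter (fun v => v ∉ V ∧ V.mkQ v ∈ W), w v :=
      massOn_eq_massOn_add_of_le w (V.le_comap_mkQ W)
    have hW := hss (W.comap V.mkQ)
    rw [hsplit, Submodule.finrank_comap_mkQ, hk, hd, heq, Nat.cast_add, add_mul, add_div] at hW
    linarith

/-- Pushing a semistable configuration forward to the quotient by a subspace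
realizing equality `w(V) = k·d/m` yields a semistable configuration on `ℂ^m/V`
of total mass `(m-k)·d/m`. -/
theorem pushforward_semistable (m : ℕ) (hm : 1 ≤ m)
    (w : (Fin m → ℂ) →₀ ℚ) (hw : IsConfiguration m w) (hss : Semistable m w)
    (d : ℚ) (hd : totalMass m w = d) (hdpos : 0 < d)
    (V : Submodule ℂ (Fin m → ℂ)) (k : ℕ) (hk : Module.finrank ℂ V = k)
    (hk0 : 0 < k) (hkm : k < m)
    (heq : massOn m w V = (k : ℚ) * d / (m : ℚ)) :
    (∑ v ∈ w.support.filter (fun v => v ∉ V), w v) = ((m : ℚ) - k) * d / (m : ℚ) ∧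
    ∀ W : Submodule ℂ ((Fin m → ℂ) ⧸ V),
      (∑ v ∈ w.support.filter (fun v => v ∉ V ∧ V.mkQ v ∈ W), w v)
        ≤ (Module.finrank ℂ W : ℚ) * d / (m : ℚ) :=
  pushforward_semistable_general m hm w hss d hd V k hk heq
end

section
/- Let m ≥ 2 and let w be a stable configuration in ℂ^m of positive total mass. Then for every v₁ in the support of w there exists v₂ in the support of w such that v₂ is not a scalar multiple of v₁ and ⟨v₁, v₂⟩ ≠ 0 (standard Hermitian inner product on ℂ^m). -/
open scoped Classical

/-- Stability: semistable, and strict inequality for every proper nontrivial subspace. -/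
noncomputable def Stable (m : ℕ) (w : (Fin m → ℂ) →₀ ℚ) : Prop :=
  Semistable m w ∧
  ∀ V : Submodule ℂ (Fin m → ℂ), 0 < Module.finrank ℂ V → Module.finrank ℂ V < m →
    massOn m w V < (Module.finrank ℂ V : ℚ) * totalMass m w / (m : ℚ)

/-! If every support vector were a multiple of `v₁` or Hermitian-orthogonal to it, the support
would lie in the union of the line `ℂ ∙ v₁` and the hyperplane `v₁ᗮ`. Stability bounds the masses
of these strictly by `d/m` and `(m-1)d/m`, so together they would carry less than the total
mass `d`. -/

open Module Matrix
open scoped ComplexOrder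

lemma totalMass_le_massOn_add_massOn {m : ℕ} {w : (Fin m → ℂ) →₀ ℚ} (hw : ∀ v, 0 ≤ w v)
    {V W : Submodule ℂ (Fin m → ℂ)} (hVW : ∀ v ∈ w.support, v ∈ V ∨ v ∈ W) :
    totalMass m w ≤ massOn m w V + massOn m w W := by
  have hsub : w.support.filter (· ∉ V) ⊆ w.support.filter (· ∈ W) := fun v hv => by
    rw [Finset.mem_filter] at hv ⊢
    exact ⟨hv.1, (hVW v hv.1).resolve_left hv.2⟩
  calc totalMass m w
      = massOn m w V + ∑ v ∈ w.support.filter (· ∉ V), w v :=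
        (Finset.sum_filter_add_sum_filter_not _ _ _).symm
    _ ≤ massOn m w V + massOn m w W := by
        gcongr
        exact Finset.sum_le_sum_of_subset_of_nonneg hsub fun v _ _ => hw v

lemma Stable.exists_mem_support_notMem_of_finrank_add_le {m : ℕ} {w : (Fin m → ℂ) →₀ ℚ}
    (hw : ∀ v, 0 ≤ w v) (hst : Stable m w) {V W : Submodule ℂ (Fin m → ℂ)}
    (hV₀ : 0 < finrank ℂ V) (hW₀ : 0 < finrank ℂ W) (hVW : finrank ℂ V + finrank ℂ W ≤ m) :
    ∃ v ∈ w.support, v ∉ V ∧ v ∉ W := by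
  by_contra! hcover
  have hV := hst.2 V hV₀ (by omega)
  have hW := hst.2 W hW₀ (by omega)
  have hm : (0 : ℚ) < m := Nat.cast_pos.2 (by omega)
  have hd : 0 ≤ totalMass m w := Finset.sum_nonneg fun v _ => hw v
  have hsum : (finrank ℂ V : ℚ) * totalMass m w / m + finrank ℂ W * totalMass m w / m
      ≤ totalMass m w := by
    rw [← add_div, ← add_mul, div_le_iff₀ hm, mul_comm _ (m : ℚ)]
    gcongr
    exact_mod_cast hVW
  have := totalMass_le_massOn_add_massOn hw fun v hv => or_iff_not_imp_left.2 (hcover v hv)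
  linarith

lemma finrank_ker_dotProduct_star_add_one {n : Type*} [Fintype n] [DecidableEq n]
    {𝕜 : Type*} [RCLike 𝕜] {v : n → 𝕜} (hv : v ≠ 0) :
    finrank 𝕜 (LinearMap.ker (dotProductEquiv 𝕜 n (star v))) + 1 = Fintype.card n := by
  rw [Module.Dual.finrank_ker_add_one_of_ne_zero, finrank_fintype_fun_eq_card]
  intro h
  exact hv (dotProduct_star_self_eq_zero.1 (LinearMap.congr_fun h v))

theorem stable_exists_nonorthogonal_general (m : ℕ) (hm : 2 ≤ m)
    (w : (Fin m → ℂ) →₀ ℚ) (hw : IsConfiguration m w) (hst : Stable m w)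
    (v₁ : Fin m → ℂ) (hv₁ : v₁ ∈ w.support) :
    ∃ v₂ ∈ w.support, (∀ c : ℂ, v₂ ≠ c • v₁) ∧
      (∑ j, v₁ j * (starRingEnd ℂ) (v₂ j)) ≠ 0 := by
  have hv₁0 : v₁ ≠ 0 := by rintro rfl; exact Finsupp.mem_support_iff.1 hv₁ hw.2
  set H := LinearMap.ker (dotProductEquiv ℂ (Fin m) (star v₁))
  have hH : finrank ℂ H + 1 = m := by simpa using finrank_ker_dotProduct_star_add_one hv₁0
  have hL : finrank ℂ (ℂ ∙ v₁) = 1 := finrank_span_singleton hv₁0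
  obtain ⟨v₂, hv₂, hv₂L, hv₂H⟩ := hst.exists_mem_support_notMem_of_finrank_add_le hw.1
    (V := ℂ ∙ v₁) (W := H) (by omega) (by omega) (by omega)
  refine ⟨v₂, hv₂, fun c h => hv₂L (Submodule.mem_span_singleton.2 ⟨c, h.symm⟩), fun h => hv₂H ?_⟩
  rw [LinearMap.mem_ker, dotProductEquiv_apply_apply, star_dotProduct, star_eq_zero]
  simpa [dotProduct, mul_comm] using h

/-- For a stable configuration of positive total mass in `ℂ^m` (`m ≥ 2`), every
support vector `v₁` admits a support vector `v₂` that is not a scalar multiple of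
`v₁` and is not Hermitian-orthogonal to `v₁`. -/
theorem stable_exists_nonorthogonal (m : ℕ) (hm : 2 ≤ m)
    (w : (Fin m → ℂ) →₀ ℚ) (hw : IsConfiguration m w) (hst : Stable m w)
    (hpos : 0 < totalMass m w) (v₁ : Fin m → ℂ) (hv₁ : v₁ ∈ w.support) :
    ∃ v₂ ∈ w.support, (∀ c : ℂ, v₂ ≠ c • v₁) ∧
      (∑ j, v₁ j * (starRingEnd ℂ) (v₂ j)) ≠ 0 :=
  stable_exists_nonorthogonal_general m hm w hw hst v₁ hv₁
end
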